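/- Let ℋ be a complex Hilbert space, H a bounded non-negative self-adjoint operator on ℋ, 𝔥 ⊆ ℋ a closed subspace with orthogonal projection P onto 𝔥, and K the compression of H to 𝔥. Let φ : [0,∞) → ℂ be a continuous admissible function and suppose there exist α > 0 and C_α ≥ 0 such that |(1 − φ(x))/x − i| ≤ C_α x^α for all x > 0. For τ > 0 let S(τ) be the operator on 𝔥 given by S(τ)f = (1/τ)(f − P(φ(τH)f)). Then for every τ > 0, ‖S(τ) − iK‖_{B(𝔥)} ≤ τ^α · C_α · ‖K_α‖_{B(𝔥)}, where K_α is the operator on 𝔥 given by K_α f = P(H^{1+α} f) with H^{1+α} defined by the continuous functional calculus. -/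

import Mathlib

open Filter Topology

set_option maxHeartbeats 1000000
set_option synthInstance.maxHeartbeats 400000

open scoped InnerProductSpace ComplexOrder

/-- The quantitative estimate in the proof of **Corollary 3.2(ii)** (bounded case). The
closed subspace `𝔥 ⊆ ℋ` is modelled by a Hilbert space `𝔥` with a linear isometric
embedding `J : 𝔥 → ℋ`; `P = J*` is the orthogonal projection onto `𝔥`, characterized by
`⟪P g, f⟫ = ⟪g, J f⟫`. For a bounded non-negative self-adjoint `H`, compression
`K = P H J`, and a continuous admissible `φ` with `|(1 - φ(x))/x - i| ≤ C x^α` for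
`x > 0`, the operators `S(τ) = τ⁻¹(I - P φ(τH) P)` satisfy
`‖S(τ) - iK‖ ≤ τ^α C ‖K_α‖` for all `τ > 0`, where `K_α = P H^{1+α} J`. -/
theorem zeno_S_norm_estimate
    {ℋ : Type*} [NormedAddCommGroup ℋ] [InnerProductSpace ℂ ℋ] [CompleteSpace ℋ]
    {𝔥 : Type*} [NormedAddCommGroup 𝔥] [InnerProductSpace ℂ 𝔥] [CompleteSpace 𝔥]
    (J : 𝔥 →ₗᵢ[ℂ] ℋ) (P : ℋ →L[ℂ] 𝔥)
    (hP : ∀ (g : ℋ) (f : 𝔥), (inner ℂ (P g) f : ℂ) = inner ℂ g (J f))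
    (Hop : ℋ →L[ℂ] ℋ) (hsa : IsSelfAdjoint Hop)
    (hpos : ∀ g : ℋ, 0 ≤ (inner ℂ (Hop g) g : ℂ).re)
    (K : 𝔥 →L[ℂ] 𝔥) (hK : ∀ f : 𝔥, K f = P (Hop (J f)))
    (φ : ℝ → ℂ) (hφc : Continuous φ)
    (hφb : ∀ x : ℝ, 0 ≤ x → ‖φ x‖ ≤ 1) (hφ0 : φ 0 = 1)
    (hφd : Tendsto (fun x : ℝ => (φ x - 1) / (x : ℂ)) (𝓝[>] 0) (𝓝 (-Complex.I)))
    (α C : ℝ) (hα : 0 < α) (hC : 0 ≤ C)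
    (hest : ∀ x : ℝ, 0 < x → ‖(1 - φ x) / (x : ℂ) - Complex.I‖ ≤ C * x ^ α)
    (S : ℝ → (𝔥 →L[ℂ] 𝔥))
    (hS : ∀ τ : ℝ, 0 < τ → ∀ f : 𝔥,
      S τ f = (τ⁻¹ : ℝ) • (f - P (cfc (fun z : ℂ => φ (τ * z.re)) Hop (J f))))
    (Kα : 𝔥 →L[ℂ] 𝔥)
    (hKα : ∀ f : 𝔥, Kα f = P (cfc (fun x : ℝ => x ^ (1 + α)) Hop (J f))) :
    ∀ τ : ℝ, 0 < τ → ‖S τ - Complex.I • K‖ ≤ τ ^ α * C * ‖Kα‖ := by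
  intro τ hτ
  have hτα : 0 < τ ^ α := Real.rpow_pos_of_pos hτ α
  set β : ℝ := 1 + α with hβdef
  have hβ : 0 < β := by positivity
  -- `P ∘ J = id`
  have hPJ : ∀ f : 𝔥, P (J f) = f := fun f => ext_inner_right ℂ fun g => by
    rw [hP]; exact J.inner_map_map f g
  -- positivity and the spectrum of `Hop`
  have h0 : (0 : ℋ →L[ℂ] ℋ) ≤ Hop := by
    rw [ContinuousLinearMap.nonneg_iff_isPositive]
    exact ⟨ContinuousLinearMap.isSelfAdjoint_iff_isSymmetric.mp hsa, fun x => by simpa [ContinuousLinearMap.reApplyInnerSelf] using hpos x⟩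
  have hspec : ∀ z ∈ spectrum ℂ Hop, ∃ x : ℝ, 0 ≤ x ∧ z = (x : ℂ) := by
    intro z hz
    have h := spectrum_nonneg_of_nonneg h0 hz
    rw [Complex.le_def] at h
    exact ⟨z.re, by simpa using h.1, by apply Complex.ext <;> simp [← h.2]⟩
  -- the functions
  set p : ℂ → ℂ := fun z => ((z.re ^ (β / 2) : ℝ) : ℂ) with hpdef
  set q : ℂ → ℂ := fun z => ((z.re ^ β : ℝ) : ℂ) with hqdef
  set F : ℂ → ℂ := fun z => (τ⁻¹ : ℂ) * (1 - φ (τ * z.re)) - Complex.I * z with hFdef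
  have hpc : Continuous p :=
    Complex.continuous_ofReal.comp
      ((Real.continuous_rpow_const (by positivity)).comp Complex.continuous_re)
  have hqc : Continuous q :=
    Complex.continuous_ofReal.comp
      ((Real.continuous_rpow_const hβ.le).comp Complex.continuous_re)
  have hΦc : Continuous (fun z : ℂ => φ (τ * z.re)) :=
    hφc.comp (continuous_const.mul Complex.continuous_re)
  have hFc : Continuous F :=
    (continuous_const.mul (continuous_const.sub hΦc)).sub
      (continuous_const.mul continuous_id)
  -- the operator `g = Hop ^ (β/2)`
  set g : ℋ →L[ℂ] ℋ := cfc p Hop with hgdef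
  have hgsa : IsSelfAdjoint g := by
    rw [hgdef, hpdef, ← cfc_real_eq_complex (fun x : ℝ => x ^ (β / 2)) hsa]
    exact cfc_predicate _ _
  have hgsym := ContinuousLinearMap.isSelfAdjoint_iff_isSymmetric.mp hgsa
  have hpp : ∀ z ∈ spectrum ℂ Hop, p z * p z = q z := by
    intro z hz
    obtain ⟨x, hx0, rfl⟩ := hspec z hz
    simp only [hpdef, hqdef, Complex.ofReal_re]
    rw [← Complex.ofReal_mul]
    congr 1
    rw [← Real.rpow_add' hx0 (by rw [add_halves]; exact hβ.ne'), add_halves]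
  have hgg : g * g = cfc q Hop := by
    rw [hgdef, ← cfc_mul p p Hop hpc.continuousOn hpc.continuousOn]
    exact cfc_congr hpp
  -- the quadratic form of `Kα`
  have hKq : ∀ f : 𝔥, (inner ℂ (Kα f) f : ℂ) = inner ℂ (g (J f)) (g (J f)) := by
    intro f
    rw [hKα, hP]
    have h1 : cfc (fun x : ℝ => x ^ β) Hop = cfc q Hop := by
      rw [cfc_real_eq_complex (fun x : ℝ => x ^ β) hsa, hqdef]
    rw [h1, ← hgg, ContinuousLinearMap.mul_apply]
    simpa using hgsym (g (J f)) (J f)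
  have hganorm : ∀ f : 𝔥, ‖g (J f)‖ ^ 2 ≤ ‖Kα‖ * ‖f‖ ^ 2 := by
    intro f
    have h3 : ‖(inner ℂ (Kα f) f : ℂ)‖ = ‖g (J f)‖ ^ 2 := by
      rw [hKq f, inner_self_eq_norm_sq_to_K]
      simp [norm_pow]
    calc ‖g (J f)‖ ^ 2 = ‖(inner ℂ (Kα f) f : ℂ)‖ := h3.symm
      _ ≤ ‖Kα f‖ * ‖f‖ := norm_inner_le_norm _ _
      _ ≤ (‖Kα‖ * ‖f‖) * ‖f‖ := by
          gcongr
          exact Kα.le_opNorm f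
      _ = ‖Kα‖ * ‖f‖ ^ 2 := by ring
  -- the identity `S τ - i K = P ∘ (cfc F Hop) ∘ J`
  have hcfcF : cfc F Hop
      = (τ⁻¹ : ℂ) • (1 - cfc (fun z : ℂ => φ (τ * z.re)) Hop) - Complex.I • Hop := by
    rw [hFdef]
    rw [cfc_sub (fun z : ℂ => (τ⁻¹ : ℂ) * (1 - φ (τ * z.re))) (fun z : ℂ => Complex.I * z)
      Hop ((continuous_const.mul (continuous_const.sub hΦc)).continuousOn)
      ((continuous_const.mul continuous_id').continuousOn)]
    rw [cfc_const_mul _ (fun z : ℂ => 1 - φ (τ * z.re)) Hop ((continuous_const.sub hΦc).continuousOn)]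
    rw [show cfc (fun z : ℂ => Complex.I * z) Hop = Complex.I • Hop from by
      rw [cfc_const_mul Complex.I (fun z : ℂ => z) Hop continuousOn_id, cfc_id' ℂ Hop]]
    congr 1
    rw [cfc_sub (fun _ : ℂ => (1 : ℂ)) (fun z : ℂ => φ (τ * z.re)) Hop continuousOn_const hΦc.continuousOn]
    rw [cfc_const (1 : ℂ) Hop hsa.isStarNormal, map_one]
  have hTf : ∀ f : 𝔥, (S τ - Complex.I • K) f = P (cfc F Hop (J f)) := by
    intro f
    rw [ContinuousLinearMap.sub_apply, ContinuousLinearMap.smul_apply, hS τ hτ f, hK, hcfcF]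
    simp only [ContinuousLinearMap.sub_apply, ContinuousLinearMap.smul_apply,
      ContinuousLinearMap.one_apply, map_sub, map_smul, hPJ, ← Complex.coe_smul]
    push_cast
    abel
  -- the main estimate
  have key : ∀ f f' : 𝔥, ‖(inner ℂ ((S τ - Complex.I • K) f) f' : ℂ)‖
      ≤ C * τ ^ α * ‖Kα‖ * (‖f‖ * ‖f'‖) := by
    intro f f'
    have hcb : 0 ≤ C * τ ^ α * (‖f‖ * ‖f'‖) := by positivity
    apply le_of_forall_pos_le_add
    intro ε hε
    set δ : ℝ := ε / (C * τ ^ α * (‖f‖ * ‖f'‖) + 1) with hδdef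
    have hδ : 0 < δ := by positivity
    set w : ℂ → ℂ := fun z => F z / (q z + (δ : ℂ)) with hwdef
    have hqδ : ∀ z ∈ spectrum ℂ Hop, q z + (δ : ℂ) ≠ 0 := by
      intro z hz
      obtain ⟨x, hx0, rfl⟩ := hspec z hz
      have h1 : q ((x : ℝ) : ℂ) + (δ : ℂ) = ((x ^ β + δ : ℝ) : ℂ) := by
        simp [hqdef]
      rw [h1]
      exact_mod_cast (add_pos_of_nonneg_of_pos (Real.rpow_nonneg hx0 β) hδ).ne'
    have hwcont : ContinuousOn w (spectrum ℂ Hop) :=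
      hFc.continuousOn.div ((hqc.add continuous_const).continuousOn) hqδ
    have hFbound : ∀ x : ℝ, 0 ≤ x → ‖F ((x : ℝ) : ℂ)‖ ≤ C * τ ^ α * x ^ β := by
      intro x hx0
      rcases eq_or_lt_of_le hx0 with h | hxpos
      · subst h
        have hF0 : F 0 = 0 := by
          simp [hFdef, hφ0]
        simp [hF0, Real.zero_rpow hβ.ne']
      · have hτx : 0 < τ * x := mul_pos hτ hxpos
        have hτx0 : ((τ * x : ℝ) : ℂ) ≠ 0 := by exact_mod_cast hτx.ne'
        have hFx : F ((x : ℝ) : ℂ)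
            = (x : ℂ) * ((1 - φ (τ * x)) / ((τ * x : ℝ) : ℂ) - Complex.I) := by
          simp only [hFdef, Complex.ofReal_re]
          have hτ0 : (τ : ℂ) ≠ 0 := by exact_mod_cast hτ.ne'
          push_cast
          field_simp
        rw [hFx, norm_mul, Complex.norm_real]
        calc |x| * ‖(1 - φ (τ * x)) / ((τ * x : ℝ) : ℂ) - Complex.I‖
            ≤ x * (C * (τ * x) ^ α) := by
              rw [abs_of_nonneg hx0]
              exact mul_le_mul_of_nonneg_left (hest (τ * x) hτx) hx0
          _ = C * τ ^ α * x ^ β := by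
              rw [Real.mul_rpow hτ.le hxpos.le, hβdef, Real.rpow_add hxpos, Real.rpow_one]
              ring
    have hwbound : ∀ z ∈ spectrum ℂ Hop, ‖w z‖ ≤ C * τ ^ α := by
      intro z hz
      obtain ⟨x, hx0, rfl⟩ := hspec z hz
      have h1 : q ((x : ℝ) : ℂ) + (δ : ℂ) = ((x ^ β + δ : ℝ) : ℂ) := by
        simp [hqdef]
      have hdpos : 0 < x ^ β + δ := add_pos_of_nonneg_of_pos (Real.rpow_nonneg hx0 β) hδ
      simp only [hwdef, norm_div, h1, Complex.norm_real, Real.norm_eq_abs, abs_of_pos hdpos]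
      rw [div_le_iff₀ hdpos]
      calc ‖F ((x : ℝ) : ℂ)‖ ≤ C * τ ^ α * x ^ β := hFbound x hx0
        _ ≤ C * τ ^ α * (x ^ β + δ) := by
            have : 0 ≤ C * τ ^ α := by positivity
            nlinarith [hδ.le]
    set W : ℋ →L[ℂ] ℋ := cfc w Hop with hWdef
    have hWn : ‖W‖ ≤ C * τ ^ α := norm_cfc_le (by positivity) hwbound
    have hdec : cfc F Hop = g * W * g + (δ : ℂ) • W := by
      have h1 : cfc (fun z => p z * w z * p z) Hop = g * W * g := by
        rw [cfc_mul (fun z => p z * w z) p Hop (hpc.continuousOn.mul hwcont) hpc.continuousOn,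
          cfc_mul p w Hop hpc.continuousOn hwcont]
      have h2 : (δ : ℂ) • W = cfc (fun z => (δ : ℂ) * w z) Hop :=
        (cfc_const_mul _ w Hop hwcont).symm
      rw [← h1, h2, ← cfc_add Hop (fun z => p z * w z * p z) (fun z => (δ : ℂ) * w z) ((hpc.continuousOn.mul hwcont).mul hpc.continuousOn)
        (continuousOn_const.mul hwcont)]
      apply cfc_congr
      intro z hz
      have hpq := hpp z hz
      have hne := hqδ z hz
      have h3 : p z * w z * p z + (δ : ℂ) * w z = w z * (q z + (δ : ℂ)) := by
        rw [← hpq]; ring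
      show F z = p z * w z * p z + (δ : ℂ) * w z
      rw [h3, hwdef]
      exact (div_mul_cancel₀ _ hne).symm
    have hTinner : (inner ℂ ((S τ - Complex.I • K) f) f' : ℂ)
        = inner ℂ (W (g (J f))) (g (J f')) + (δ : ℂ) * inner ℂ (W (J f)) (J f') := by
      rw [hTf f, hP, hdec]
      rw [ContinuousLinearMap.add_apply, inner_add_left, ContinuousLinearMap.smul_apply,
        inner_smul_left, Complex.conj_ofReal]
      congr 1
      rw [ContinuousLinearMap.mul_apply, ContinuousLinearMap.mul_apply]
      simpa using hgsym (W (g (J f))) (J f')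
    have hgprod : ‖g (J f)‖ * ‖g (J f')‖ ≤ ‖Kα‖ * (‖f‖ * ‖f'‖) := by
      have h1 := hganorm f
      have h2 := hganorm f'
      have h3 : (‖g (J f)‖ * ‖g (J f')‖) ^ 2 ≤ (‖Kα‖ * (‖f‖ * ‖f'‖)) ^ 2 := by
        have hn1 : (0:ℝ) ≤ ‖g (J f)‖ := norm_nonneg _
        have hn2 : (0:ℝ) ≤ ‖g (J f')‖ := norm_nonneg _
        have hn3 : (0:ℝ) ≤ ‖Kα‖ := norm_nonneg _
        have hn4 : (0:ℝ) ≤ ‖f‖ := norm_nonneg _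
        have hn5 : (0:ℝ) ≤ ‖f'‖ := norm_nonneg _
        nlinarith [sq_nonneg (‖g (J f)‖ * ‖g (J f')‖), mul_nonneg (mul_nonneg hn3 hn4) hn4]
      exact (pow_le_pow_iff_left₀ (by positivity) (by positivity) two_ne_zero).mp h3
    have e1 : ‖(inner ℂ (W (g (J f))) (g (J f')) : ℂ)‖
        ≤ C * τ ^ α * (‖Kα‖ * (‖f‖ * ‖f'‖)) := by
      calc ‖(inner ℂ (W (g (J f))) (g (J f')) : ℂ)‖
          ≤ ‖W (g (J f))‖ * ‖g (J f')‖ := norm_inner_le_norm _ _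
        _ ≤ (‖W‖ * ‖g (J f)‖) * ‖g (J f')‖ := by
            gcongr
            exact W.le_opNorm _
        _ = ‖W‖ * (‖g (J f)‖ * ‖g (J f')‖) := by ring
        _ ≤ (C * τ ^ α) * (‖Kα‖ * (‖f‖ * ‖f'‖)) := by
            apply mul_le_mul hWn hgprod (by positivity) (by positivity)
    have e2 : ‖(δ : ℂ) * (inner ℂ (W (J f)) (J f') : ℂ)‖
        ≤ δ * (C * τ ^ α * (‖f‖ * ‖f'‖)) := by
      rw [norm_mul, Complex.norm_real, Real.norm_eq_abs, abs_of_pos hδ]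
      apply mul_le_mul_of_nonneg_left _ hδ.le
      calc ‖(inner ℂ (W (J f)) (J f') : ℂ)‖ ≤ ‖W (J f)‖ * ‖J f'‖ := norm_inner_le_norm _ _
        _ ≤ (‖W‖ * ‖J f‖) * ‖J f'‖ := by
            gcongr
            exact W.le_opNorm _
        _ = ‖W‖ * (‖f‖ * ‖f'‖) := by rw [J.norm_map, J.norm_map]; ring
        _ ≤ C * τ ^ α * (‖f‖ * ‖f'‖) := by
            apply mul_le_mul_of_nonneg_right hWn (by positivity)
    have hδε : δ * (C * τ ^ α * (‖f‖ * ‖f'‖)) ≤ ε := by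
      have h4 : δ * (C * τ ^ α * (‖f‖ * ‖f'‖) + 1) = ε := by
        rw [hδdef]
        field_simp
      nlinarith [hδ.le]
    calc ‖(inner ℂ ((S τ - Complex.I • K) f) f' : ℂ)‖
        ≤ ‖(inner ℂ (W (g (J f))) (g (J f')) : ℂ)‖
          + ‖(δ : ℂ) * (inner ℂ (W (J f)) (J f') : ℂ)‖ := by
          rw [hTinner]; exact norm_add_le _ _
      _ ≤ C * τ ^ α * (‖Kα‖ * (‖f‖ * ‖f'‖)) + δ * (C * τ ^ α * (‖f‖ * ‖f'‖)) :=
          add_le_add e1 e2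
      _ ≤ C * τ ^ α * ‖Kα‖ * (‖f‖ * ‖f'‖) + ε := by
          rw [show C * τ ^ α * (‖Kα‖ * (‖f‖ * ‖f'‖)) = C * τ ^ α * ‖Kα‖ * (‖f‖ * ‖f'‖)
            from by ring]
          exact add_le_add le_rfl hδε
  -- conclude the operator norm bound
  apply ContinuousLinearMap.opNorm_le_bound _ (by positivity)
  intro f
  rcases eq_or_lt_of_le (norm_nonneg ((S τ - Complex.I • K) f)) with h | h
  · rw [← h]; positivity
  · have h1 := key f ((S τ - Complex.I • K) f)
    rw [inner_self_eq_norm_sq_to_K] at h1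
    have h2 : ‖(S τ - Complex.I • K) f‖ ^ 2
        ≤ C * τ ^ α * ‖Kα‖ * (‖f‖ * ‖(S τ - Complex.I • K) f‖) := by
      calc ‖(S τ - Complex.I • K) f‖ ^ 2
          = ‖((‖(S τ - Complex.I • K) f‖ : ℂ)) ^ 2‖ := by
            rw [norm_pow, Complex.norm_real, Real.norm_eq_abs, abs_norm]
        _ ≤ _ := h1
    have h3 : ‖(S τ - Complex.I • K) f‖ * ‖(S τ - Complex.I • K) f‖
        ≤ (τ ^ α * C * ‖Kα‖ * ‖f‖) * ‖(S τ - Complex.I • K) f‖ := by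
      nlinarith [h2]
    exact le_of_mul_le_mul_right h3 h
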